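/- Let w ∈ Área_n and let 1 ≤ i ≤ n−1. Then ℓ(w·s_i) < ℓ(w) if and only if ℓ(w·t_i) > ℓ(w). -/

import Mathlib

/-!
On `W n` the Coxeter length equals the statistic `inv + nsp + neg` of the row form
`w(1), …, w(n)`. Right multiplication by `s_i` changes it by `±1` according as
`w(i) < w(i+1)` or not, right multiplication by `t` by `±1` according to the sign of `w(1)`,
and every `w ≠ 1` has such a descent; so the statistic is a lower bound on word lengths and
is attained by a word. Right multiplication by `t_j` negates `w(j)`: when `w(j) > 0` no pair
contributes less afterwards and one more entry is negative, so `ℓ(w t_j) > ℓ(w)` exactly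
when `w(j) > 0`. Finally, in `Área_n` two entries of equal sign are ordered by that sign, so
`w(i) > w(i+1)` exactly when `w(i) > 0`.
-/

namespace BnPaper

/-- The generator `t`: swaps `1` and `-1`, fixing all other points. -/
def t : Equiv.Perm ℤ := Equiv.swap 1 (-1)

/-- The generator `s i`: swaps `i ↔ i+1` and `-i ↔ -(i+1)`. -/
def s (i : ℤ) : Equiv.Perm ℤ := Equiv.swap i (i + 1) * Equiv.swap (-i) (-(i + 1))

/-- The descending product `s_j · s_{j-1} ⋯ s_i` (the identity when `i > j`). -/
def desc (i j : ℕ) : Equiv.Perm ℤ :=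
  ((List.range (j + 1 - i)).map (fun k => s ((j : ℤ) - (k : ℤ)))).prod

/-- The ascending product `s_i · s_{i+1} ⋯ s_j` (the identity when `i > j`). -/
def asc (i j : ℕ) : Equiv.Perm ℤ :=
  ((List.range (j + 1 - i)).map (fun k => s ((i : ℤ) + (k : ℤ)))).prod

/-- `t_j = s_{j-1} ⋯ s_1 · t · s_1 ⋯ s_{j-1}`. -/
def tt (j : ℕ) : Equiv.Perm ℤ := desc 1 (j - 1) * t * (desc 1 (j - 1))⁻¹

/-- The Coxeter generating set `{t, s_1, …, s_{n-1}}` of `W_n`. -/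
def gens (n : ℕ) : Set (Equiv.Perm ℤ) :=
  insert t {g | ∃ i : ℕ, 1 ≤ i ∧ i ≤ n - 1 ∧ g = s (i : ℤ)}

/-- The Coxeter length: the least number of generators whose product is `w`. -/
noncomputable def len (n : ℕ) (w : Equiv.Perm ℤ) : ℕ :=
  sInf {k | ∃ l : List (Equiv.Perm ℤ), l.length = k ∧ (∀ g ∈ l, g ∈ gens n) ∧ l.prod = w}

/-- `W_n` realised as the signed permutations of `{-n, …, -1, 1, …, n}`:
permutations of `ℤ` that are odd (`w(-i) = -w(i)`) and fix everything beyond `n` in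
absolute value. -/
def W (n : ℕ) : Set (Equiv.Perm ℤ) :=
  {w | (∀ i : ℤ, w (-i) = -(w i)) ∧ ∀ i : ℤ, (n : ℤ) < |i| → w i = i}

/-- The right descent set `Des(w)`. -/
def Des (n : ℕ) (w : Equiv.Perm ℤ) : Set (Equiv.Perm ℤ) :=
  {g | g ∈ gens n ∧ len n (w * g) < len n w}

/-- The enhanced descent-set invariant
`ρ_m(w) = Des(w) ∪ {t_j : 2 ≤ j ≤ m, ℓ(w t_j) < ℓ(w)}`. -/
def rho (n m : ℕ) (w : Equiv.Perm ℤ) : Set (Equiv.Perm ℤ) :=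
  Des n w ∪ {g | ∃ j : ℕ, 2 ≤ j ∧ j ≤ m ∧ g = tt j ∧ len n (w * tt j) < len n w}

/-- `Área_n`: the negative entries of the row form appear in increasing order and
the positive entries in strictly decreasing order. -/
def Area (n : ℕ) : Set (Equiv.Perm ℤ) :=
  {w | w ∈ W n ∧ ∀ i j : ℤ, 1 ≤ i → i < j → j ≤ (n : ℤ) →
    (w i < 0 → w j < 0 → w i < w j) ∧ (0 < w i → 0 < w j → w j < w i)}

/-- The suffix relation `y ≤_e w`: `w = z · y` with `ℓ(w) = ℓ(z) + ℓ(y)`. -/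
def Suf (n : ℕ) (y w : Equiv.Perm ℤ) : Prop :=
  ∃ z, z ∈ W n ∧ w = z * y ∧ len n w = len n z + len n y

/-- `a_q = (t)(s_1 t)(s_2 s_1 t) ⋯ (s_{q-1} ⋯ s_1 t)`. -/
def aw (q : ℕ) : Equiv.Perm ℤ := ((List.range q).map (fun k => desc 1 k * t)).prod

/-- `b_q = (s_{q+1})(s_{q+2} s_{q+1}) ⋯ (s_{n-1} ⋯ s_{q+1})` (identity for `q ≥ n-1`). -/
def bw (n q : ℕ) : Equiv.Perm ℤ :=
  ((List.range (n - 1 - q)).map (fun k => desc (q + 1) (q + 1 + k))).prod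

/-- `σ_{n,q} = a_q · b_q`. -/
def sig (n q : ℕ) : Equiv.Perm ℤ := aw q * bw n q

/-- `p_{n,q} = (s_{n-q} ⋯ s_1)(s_{n-q+1} ⋯ s_2) ⋯ (s_{n-1} ⋯ s_q)`,
with `p_{n,0} = p_{n,n} = e`. -/
def p (n q : ℕ) : Equiv.Perm ℤ :=
  ((List.range q).map (fun m => desc (1 + m) (n - q + m))).prod

/-- `Π_{n,q} = (s_{n-q-1} ⋯ s_1) · t · p_{n,q}`. -/
def PiElt (n q : ℕ) : Equiv.Perm ℤ := desc 1 (n - q - 1) * t * p n q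

/-- `Υ(w) = {z ∈ Área_n : Des(z) = Des(w)}`. -/
def Ups (n : ℕ) (w : Equiv.Perm ℤ) : Set (Equiv.Perm ℤ) :=
  {z | z ∈ Area n ∧ Des n z = Des n w}

/-- The parabolic subgroup `W_J = ⟨s_1, …, s_{n-1}⟩`. -/
def WJ (n : ℕ) : Set (Equiv.Perm ℤ) :=
  ↑(Subgroup.closure {g | ∃ i : ℕ, 1 ≤ i ∧ i ≤ n - 1 ∧ g = s (i : ℤ)})

/-- The parabolic subgroup `W_K = ⟨t, s_1, …, s_{n-2}⟩`. -/
def WK (n : ℕ) : Set (Equiv.Perm ℤ) :=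
  ↑(Subgroup.closure (insert t {g | ∃ i : ℕ, 1 ≤ i ∧ i ≤ n - 2 ∧ g = s (i : ℤ)}))

/-- Knuth relation of type `I_k` : `w' = w · s_{i+1}` when
`w(i+1) < w(i) < w(i+2)` or `w(i+2) < w(i) < w(i+1)`. -/
def stepI (k : ℕ) (w w' : Equiv.Perm ℤ) : Prop :=
  ∃ i : ℤ, 1 ≤ i ∧ i ≤ (k : ℤ) - 2 ∧
    ((w (i + 1) < w i ∧ w i < w (i + 2)) ∨ (w (i + 2) < w i ∧ w i < w (i + 1))) ∧
    w' = w * s (i + 1)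

/-- Knuth relation of type `II_k` : `w' = w · s_i` when
`w(i+1) < w(i+2) < w(i)` or `w(i) < w(i+2) < w(i+1)`. -/
def stepII (k : ℕ) (w w' : Equiv.Perm ℤ) : Prop :=
  ∃ i : ℤ, 1 ≤ i ∧ i ≤ (k : ℤ) - 2 ∧
    ((w (i + 1) < w (i + 2) ∧ w (i + 2) < w i) ∨ (w i < w (i + 2) ∧ w (i + 2) < w (i + 1))) ∧
    w' = w * s i

/-- Knuth relation of type `III_k` : `w' = w · s_i` when `w(i)` and `w(i+1)` have
opposite signs. -/
def stepIII (k : ℕ) (w w' : Equiv.Perm ℤ) : Prop :=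
  ∃ i : ℤ, 1 ≤ i ∧ i ≤ (k : ℤ) - 1 ∧
    ((w i < 0 ∧ 0 < w (i + 1)) ∨ (w (i + 1) < 0 ∧ 0 < w i)) ∧
    w' = w * s i

open Finset Equiv

lemma s_apply {i : ℤ} (hi : 1 ≤ i) (x : ℤ) :
    s i x = if x = i then i + 1 else if x = i + 1 then i else
      if x = -i then -(i + 1) else if x = -(i + 1) then -i else x := by
  simp only [s, Perm.mul_apply, swap_apply_def]
  split_ifs <;> omega

lemma s_apply_s {i : ℤ} (hi : 1 ≤ i) (x : ℤ) : s i (s i x) = x := by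
  rw [s_apply hi x, s_apply hi]
  split_ifs <;> omega

lemma s_mul_s {i : ℤ} (hi : 1 ≤ i) : s i * s i = 1 :=
  Perm.ext (s_apply_s hi)

lemma swap_neg_apply_neg (j x : ℤ) : swap j (-j) (-x) = -swap j (-j) x := by
  simp only [swap_apply_def]
  split_ifs <;> omega

lemma t_eq_swap : t = swap 1 (-1) := rfl

/-- `desc` coerces `List.range _ : List ℕ` to `List ℤ` through the list monad; this undoes it. -/
lemma desc_eq_prod_map (i j : ℕ) :
    desc i j = ((List.range (j + 1 - i)).map fun k : ℕ => s ((j : ℤ) - k)).prod := by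
  unfold desc
  congr 1
  induction List.range (j + 1 - i) <;> simp_all

lemma desc_one_succ (j : ℕ) : desc 1 (j + 1) = s ((j : ℤ) + 1) * desc 1 j := by
  simp only [desc_eq_prod_map, Nat.add_sub_cancel, List.range_succ_eq_map, List.map_cons,
    List.prod_cons, List.map_map]
  congr 3
  funext k
  simp only [Function.comp_apply]
  push_cast
  ring_nf

lemma desc_one_apply_one (j : ℕ) : desc 1 j 1 = j + 1 ∧ desc 1 j (-1) = -(j + 1) := by
  induction j with
  | zero => simp [desc]
  | succ j ih =>
    rw [desc_one_succ, Perm.mul_apply, Perm.mul_apply, ih.1, ih.2, s_apply (by omega),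
      s_apply (by omega)]
    push_cast
    constructor <;> split_ifs <;> omega

lemma tt_eq_swap {j : ℕ} (hj : 1 ≤ j) : tt j = swap (j : ℤ) (-j) := by
  obtain ⟨h1, h2⟩ := desc_one_apply_one (j - 1)
  rw [tt, t, ← swap_apply_apply, h1, h2]
  push_cast [hj]
  ring_nf

lemma one_mem_W (n : ℕ) : (1 : Perm ℤ) ∈ W n :=
  ⟨fun _ => rfl, fun _ _ => rfl⟩

lemma mul_mem_W {n : ℕ} {u v : Perm ℤ} (hu : u ∈ W n) (hv : v ∈ W n) : u * v ∈ W n :=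
  ⟨fun x => by simp only [Perm.mul_apply, hv.1, hu.1],
   fun x hx => by simp only [Perm.mul_apply, hv.2 x hx, hu.2 x hx]⟩

lemma swap_neg_mem_W {n : ℕ} {j : ℤ} (hj : 1 ≤ j) (hjn : j ≤ n) : swap j (-j) ∈ W n := by
  refine ⟨swap_neg_apply_neg j, fun x hx => ?_⟩
  rw [lt_abs] at hx
  simp only [swap_apply_def]
  split_ifs <;> omega

lemma s_mem_W {n : ℕ} {i : ℤ} (hi : 1 ≤ i) (hin : i + 1 ≤ n) : s i ∈ W n := by
  refine ⟨fun x => ?_, fun x hx => ?_⟩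
  · rw [s_apply hi, s_apply hi]
    split_ifs <;> omega
  · rw [lt_abs] at hx
    rw [s_apply hi]
    split_ifs <;> omega

lemma s_mem_gens {n : ℕ} {i : ℤ} (hi : 1 ≤ i) (hin : i + 1 ≤ n) : s i ∈ gens n :=
  Set.mem_insert_of_mem _ ⟨i.toNat, by omega, by omega, by rw [Int.toNat_of_nonneg (by omega)]⟩

lemma gens_subset_W {n : ℕ} (hn : 1 ≤ n) : gens n ⊆ W n := by
  rintro g (rfl | ⟨i, hi, hin, rfl⟩)
  · exact swap_neg_mem_W le_rfl (by exact_mod_cast hn)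
  · exact s_mem_W (by exact_mod_cast hi) (by omega)

lemma apply_zero_of_odd {u : Perm ℤ} (hu : ∀ x, u (-x) = -u x) : u 0 = 0 := by
  have := hu 0
  rw [neg_zero] at this
  omega

lemma apply_ne_zero_of_odd {u : Perm ℤ} (hu : ∀ x, u (-x) = -u x) {x : ℤ} (hx : x ≠ 0) :
    u x ≠ 0 := by
  rw [← apply_zero_of_odd hu]
  exact u.injective.ne hx

lemma apply_le_of_mem_W {n : ℕ} {u : Perm ℤ} (hu : u ∈ W n) {k : ℤ} (hkn : k ≤ n) : u k ≤ n := by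
  by_contra h
  have hfix : u (u k) = u k := hu.2 _ (lt_abs.2 (Or.inl (by omega)))
  rw [u.injective hfix] at h
  omega

noncomputable def pairCount (n : ℕ) (r : ℤ → ℤ → Prop) [DecidableRel r] (w : Perm ℤ) : ℕ :=
  ∑ p ∈ Icc (1 : ℤ) n ×ˢ Icc (1 : ℤ) n, if p.1 < p.2 ∧ r (w p.1) (w p.2) then 1 else 0

noncomputable def negCount (n : ℕ) (w : Perm ℤ) : ℕ :=
  ∑ a ∈ Icc (1 : ℤ) n, if w a < 0 then 1 else 0

/-- `inv(w) + nsp(w) + neg(w)` of Björner–Brenti, *Combinatorics of Coxeter groups*,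
Prop. 8.1.1, read off the row form `w(1), …, w(n)`. -/
noncomputable def lengthB (n : ℕ) (w : Perm ℤ) : ℕ :=
  pairCount n (fun x y => y < x) w + pairCount n (fun x y => x + y < 0) w + negCount n w

lemma s_apply_mem_Icc_iff {n : ℕ} {i : ℤ} (hi : 1 ≤ i) (hin : i + 1 ≤ n) (x : ℤ) :
    s i x ∈ Icc (1 : ℤ) n ↔ x ∈ Icc (1 : ℤ) n := by
  simp only [mem_Icc, s_apply hi]
  split_ifs <;> omega

lemma pairCount_mul_s {n : ℕ} (r : ℤ → ℤ → Prop) [DecidableRel r] (w : Perm ℤ) {i : ℤ}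
    (hi : 1 ≤ i) (hin : i + 1 ≤ n) :
    pairCount n r (w * s i) + (if r (w i) (w (i + 1)) then 1 else 0) =
      pairCount n r w + (if r (w (i + 1)) (w i) then 1 else 0) := by
  set P := Icc (1 : ℤ) n ×ˢ Icc (1 : ℤ) n
  have hP : ∀ q : ℤ × ℤ, q ∈ P ↔ (s i).prodCongr (s i) q ∈ P := fun q => by
    simp only [P, mem_product, prodCongr_apply, Prod.map, s_apply_mem_Icc_iff hi hin]
  have reindex : pairCount n r (w * s i) =
      ∑ q ∈ P, if s i q.1 < s i q.2 ∧ r (w q.1) (w q.2) then 1 else 0 :=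
    sum_equiv ((s i).prodCongr (s i)) hP fun q _ => by
      simp only [prodCongr_apply, Prod.map, Perm.mul_apply, s_apply_s hi]
      rfl
  -- on `[1, n]²`, `s i` preserves the order of a pair except for `(i, i + 1)` and `(i + 1, i)`
  have pointwise : ∀ q ∈ P,
      (if s i q.1 < s i q.2 ∧ r (w q.1) (w q.2) then 1 else 0) +
          (if q = (i, i + 1) then (if r (w i) (w (i + 1)) then 1 else 0) else 0) =
        (if q.1 < q.2 ∧ r (w q.1) (w q.2) then 1 else 0) +
          (if q = (i + 1, i) then (if r (w (i + 1)) (w i) then 1 else 0) else 0) := by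
    rintro ⟨a, b⟩ hq
    simp only [P, mem_product, mem_Icc] at hq
    simp only [Prod.mk.injEq]
    by_cases h₁ : a = i ∧ b = i + 1
    · obtain ⟨rfl, rfl⟩ := h₁
      simp [s_apply hi]
    by_cases h₂ : a = i + 1 ∧ b = i
    · obtain ⟨rfl, rfl⟩ := h₂
      simp [s_apply hi]
    have hlt : s i a < s i b ↔ a < b := by
      rw [s_apply hi, s_apply hi]
      split_ifs <;> omega
    simp only [hlt, if_neg h₁, if_neg h₂]
  have hmem₁ : (i, i + 1) ∈ P := by simp only [P, mem_product, mem_Icc]; omega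
  have hmem₂ : (i + 1, i) ∈ P := by simp only [P, mem_product, mem_Icc]; omega
  have hsum := sum_congr rfl pointwise
  rw [sum_add_distrib, sum_add_distrib, sum_ite_eq_of_mem' _ _ _ hmem₁,
    sum_ite_eq_of_mem' _ _ _ hmem₂] at hsum
  rw [reindex, hsum]
  rfl

lemma negCount_mul_s {n : ℕ} (w : Perm ℤ) {i : ℤ} (hi : 1 ≤ i) (hin : i + 1 ≤ n) :
    negCount n (w * s i) = negCount n w :=
  sum_equiv (s i) (fun x => (s_apply_mem_Icc_iff hi hin x).symm) fun _ _ => rfl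

lemma lengthB_mul_s_of_lt {n : ℕ} {w : Perm ℤ} {i : ℤ} (hi : 1 ≤ i) (hin : i + 1 ≤ n)
    (h : w i < w (i + 1)) : lengthB n (w * s i) = lengthB n w + 1 := by
  have hinv := pairCount_mul_s (fun x y => y < x) w hi hin
  have hnsp := pairCount_mul_s (fun x y => x + y < 0) w hi hin
  simp only [if_pos h, if_neg h.not_gt, add_comm (w (i + 1))] at hinv hnsp
  simp only [lengthB, negCount_mul_s w hi hin]
  omega

lemma lengthB_mul_s_of_gt {n : ℕ} {w : Perm ℤ} {i : ℤ} (hi : 1 ≤ i) (hin : i + 1 ≤ n)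
    (h : w (i + 1) < w i) : lengthB n (w * s i) + 1 = lengthB n w := by
  have := lengthB_mul_s_of_lt (w := w * s i) hi hin (by simpa [s_apply hi] using h)
  rwa [mul_assoc, s_mul_s hi, mul_one, eq_comm] at this

lemma lengthB_mul_s_lt_iff {n : ℕ} {w : Perm ℤ} {i : ℤ} (hi : 1 ≤ i) (hin : i + 1 ≤ n) :
    lengthB n (w * s i) < lengthB n w ↔ w (i + 1) < w i := by
  rcases lt_or_gt_of_ne (w.injective.ne (show i ≠ i + 1 by omega)) with h | h
  · have := lengthB_mul_s_of_lt hi hin h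
    constructor <;> intro <;> omega
  · have := lengthB_mul_s_of_gt hi hin h
    constructor <;> intro <;> omega

def pairTerm (w : Perm ℤ) (p : ℤ × ℤ) : ℕ :=
  (if p.1 < p.2 ∧ w p.2 < w p.1 then 1 else 0) + (if p.1 < p.2 ∧ w p.1 + w p.2 < 0 then 1 else 0)

lemma lengthB_eq_sum_pairTerm_add_negCount (n : ℕ) (u : Perm ℤ) :
    lengthB n u = ∑ p ∈ Icc (1 : ℤ) n ×ˢ Icc (1 : ℤ) n, pairTerm u p + negCount n u := by
  rw [lengthB, pairCount, pairCount, ← sum_add_distrib]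
  rfl

section SignFlip

variable {n : ℕ} {w : Perm ℤ} (hw : ∀ x, w (-x) = -w x) {j : ℤ}
include hw

lemma mul_swap_neg_apply_neg (j : ℤ) (x : ℤ) :
    (w * swap j (-j)) (-x) = -(w * swap j (-j)) x := by
  simp only [Perm.mul_apply, swap_neg_apply_neg, hw]

lemma mul_swap_neg_apply (hj : 1 ≤ j) {x : ℤ} (hx : 1 ≤ x) :
    (w * swap j (-j)) x = if x = j then -w j else w x := by
  rw [Perm.mul_apply, swap_apply_def]
  split_ifs
  · exact hw j
  · omega
  · rfl

lemma negCount_mul_swap_neg (hj : 1 ≤ j) (hjn : j ≤ n) (h : 0 < w j) :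
    negCount n (w * swap j (-j)) = negCount n w + 1 := by
  have pointwise : ∀ a ∈ Icc (1 : ℤ) n, (if (w * swap j (-j)) a < 0 then 1 else 0) =
      (if w a < 0 then 1 else 0) + (if a = j then 1 else 0) := fun a ha => by
    rw [mul_swap_neg_apply hw hj (mem_Icc.1 ha).1]
    rcases eq_or_ne a j with rfl | haj
    · simp [h, h.not_gt]
    · simp [haj]
  rw [negCount, sum_congr rfl pointwise, sum_add_distrib,
    sum_ite_eq_of_mem' _ _ _ (mem_Icc.2 ⟨hj, hjn⟩)]
  rfl

lemma apply_ne_and_ne_neg (hj : 1 ≤ j) {x : ℤ} (hx : 1 ≤ x) (hxj : x ≠ j) :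
    w x ≠ w j ∧ w x ≠ -w j := by
  rw [← hw]
  exact ⟨w.injective.ne hxj, w.injective.ne (by omega)⟩

lemma pairTerm_mul_swap_neg_of_le (hj : 1 ≤ j) {p : ℤ × ℤ} (hja : j ≤ p.1) (hb : 1 ≤ p.2) :
    pairTerm (w * swap j (-j)) p = pairTerm w p := by
  obtain ⟨a, b⟩ := p
  dsimp only at hja hb
  simp only [pairTerm]
  rw [mul_swap_neg_apply hw hj (x := a) (by omega), mul_swap_neg_apply hw hj hb]
  have hb' := apply_ne_and_ne_neg hw hj hb
  rcases eq_or_ne a j with rfl | haj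
  · split_ifs <;> omega
  · have := apply_ne_and_ne_neg hw hj (by omega) haj
    split_ifs <;> omega

/-- Only a pair `(a, j)` with `a < j` can change: `[w j < w a] + [w a < -w j]` becomes
`[-w j < w a] + [w a < w j]`, which is no smaller when `w j > 0`. -/
lemma pairTerm_le_mul_swap_neg (hj : 1 ≤ j) (h : 0 < w j) {p : ℤ × ℤ} (ha : 1 ≤ p.1)
    (hb : 1 ≤ p.2) : pairTerm w p ≤ pairTerm (w * swap j (-j)) p := by
  obtain ⟨a, b⟩ := p
  dsimp only at ha hb
  rcases le_or_gt j a with hja | haj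
  · exact (pairTerm_mul_swap_neg_of_le hw hj hja hb).ge
  simp only [pairTerm]
  rw [mul_swap_neg_apply hw hj ha, mul_swap_neg_apply hw hj hb]
  have := apply_ne_and_ne_neg hw hj ha haj.ne
  rcases eq_or_ne b j with rfl | hbj
  · split_ifs <;> omega
  · have := apply_ne_and_ne_neg hw hj hb hbj
    split_ifs <;> omega

lemma lengthB_lt_mul_swap_neg (hj : 1 ≤ j) (hjn : j ≤ n) (h : 0 < w j) :
    lengthB n w < lengthB n (w * swap j (-j)) := by
  have hpairs : ∑ p ∈ Icc (1 : ℤ) n ×ˢ Icc (1 : ℤ) n, pairTerm w p ≤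
      ∑ p ∈ Icc (1 : ℤ) n ×ˢ Icc (1 : ℤ) n, pairTerm (w * swap j (-j)) p :=
    sum_le_sum fun p hp => by
      simp only [mem_product, mem_Icc] at hp
      exact pairTerm_le_mul_swap_neg hw hj h hp.1.1 hp.2.1
  rw [lengthB_eq_sum_pairTerm_add_negCount, lengthB_eq_sum_pairTerm_add_negCount,
    negCount_mul_swap_neg hw hj hjn h]
  omega

lemma lengthB_lt_mul_swap_neg_iff (hj : 1 ≤ j) (hjn : j ≤ n) :
    lengthB n w < lengthB n (w * swap j (-j)) ↔ 0 < w j := by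
  refine ⟨fun hlt => ?_, lengthB_lt_mul_swap_neg hw hj hjn⟩
  by_contra hneg
  have hwj : w j < 0 := lt_of_le_of_ne (not_lt.1 hneg) (apply_ne_zero_of_odd hw (by omega))
  have := lengthB_lt_mul_swap_neg (mul_swap_neg_apply_neg hw j) hj hjn
    (by rw [mul_swap_neg_apply hw hj hj, if_pos rfl]; omega)
  rw [mul_assoc, swap_mul_self, mul_one] at this
  omega

lemma lengthB_mul_t_of_pos (hn : 1 ≤ n) (h : 0 < w 1) : lengthB n (w * t) = lengthB n w + 1 := by
  have hpairs : ∑ p ∈ Icc (1 : ℤ) n ×ˢ Icc (1 : ℤ) n, pairTerm (w * t) p =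
      ∑ p ∈ Icc (1 : ℤ) n ×ˢ Icc (1 : ℤ) n, pairTerm w p :=
    sum_congr rfl fun p hp => by
      simp only [mem_product, mem_Icc] at hp
      exact pairTerm_mul_swap_neg_of_le hw le_rfl hp.1.1 hp.2.1
  rw [lengthB_eq_sum_pairTerm_add_negCount, lengthB_eq_sum_pairTerm_add_negCount, hpairs,
    t_eq_swap, negCount_mul_swap_neg hw le_rfl (by exact_mod_cast hn) h, add_assoc]

lemma lengthB_mul_t_of_neg (hn : 1 ≤ n) (h : w 1 < 0) : lengthB n (w * t) + 1 = lengthB n w := by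
  have := lengthB_mul_t_of_pos (mul_swap_neg_apply_neg hw 1) hn
    (by rw [mul_swap_neg_apply hw le_rfl le_rfl, if_pos rfl]; omega)
  rwa [t_eq_swap, mul_assoc, swap_mul_self, mul_one, eq_comm] at this

end SignFlip

lemma lengthB_one (n : ℕ) : lengthB n 1 = 0 := by
  simp only [lengthB, pairCount, negCount, Perm.one_apply, Nat.add_eq_zero_iff]
  refine ⟨⟨?_, ?_⟩, ?_⟩ <;> refine sum_eq_zero fun p hp => if_neg ?_ <;>
    simp only [mem_product, mem_Icc] at hp <;> omega

lemma mul_self_of_mem_gens {n : ℕ} {g : Perm ℤ} (hg : g ∈ gens n) : g * g = 1 := by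
  rcases hg with rfl | ⟨i, hi, -, rfl⟩
  · exact swap_mul_self _ _
  · exact s_mul_s (by exact_mod_cast hi)

lemma lengthB_mul_le {n : ℕ} (hn : 1 ≤ n) {w g : Perm ℤ} (hw : w ∈ W n) (hg : g ∈ gens n) :
    lengthB n (w * g) ≤ lengthB n w + 1 := by
  rcases hg with rfl | ⟨i, hi, hin, rfl⟩
  · rcases lt_or_gt_of_ne (apply_ne_zero_of_odd hw.1 one_ne_zero) with h | h
    · have := lengthB_mul_t_of_neg hw.1 hn h
      omega
    · exact (lengthB_mul_t_of_pos hw.1 hn h).le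
  · have hi' : (1 : ℤ) ≤ i := by exact_mod_cast hi
    have hin' : (i : ℤ) + 1 ≤ n := by omega
    rcases lt_or_gt_of_ne (w.injective.ne (show (i : ℤ) ≠ i + 1 by omega)) with h | h
    · exact (lengthB_mul_s_of_lt hi' hin' h).le
    · have := lengthB_mul_s_of_gt hi' hin' h
      omega

lemma lengthB_mul_prod_le {n : ℕ} (hn : 1 ≤ n) :
    ∀ (l : List (Perm ℤ)) {w : Perm ℤ}, w ∈ W n → (∀ g ∈ l, g ∈ gens n) →
      lengthB n (w * l.prod) ≤ lengthB n w + l.length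
  | [], w, _, _ => by simp
  | g :: l, w, hw, hl => by
    have hg := hl g List.mem_cons_self
    have hrest := lengthB_mul_prod_le hn l (mul_mem_W hw (gens_subset_W hn hg))
      fun g' h => hl g' (List.mem_cons_of_mem _ h)
    have hstep := lengthB_mul_le hn hw hg
    rw [List.prod_cons, ← mul_assoc, List.length_cons]
    omega

lemma eq_one_of_mem_W_of_increasing {n : ℕ} {u : Perm ℤ} (hu : u ∈ W n) (h1 : 0 < u 1)
    (hmono : ∀ k : ℤ, 1 ≤ k → k + 1 ≤ n → u k < u (k + 1)) : u = 1 := by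
  have hge : ∀ k : ℤ, 1 ≤ k → k ≤ n → k ≤ u k := by
    intro k hk
    induction k, hk using Int.leInduction with
    | base => intro; omega
    | succ k hk ih =>
      intro hkn
      have hstep := hmono k hk hkn
      have := ih (by omega)
      omega
  have hle : ∀ k : ℤ, k ≤ n → 1 ≤ k → u k ≤ k := by
    intro k hk
    induction k, hk using Int.leInductionDown with
    | base => intro; exact apply_le_of_mem_W hu le_rfl
    | pred k hk ih =>
      intro hk1
      have hstep : u (k - 1) < u k := by simpa using hmono (k - 1) hk1 (by omega)
      have := ih (by omega)
      omega
  have hpos : ∀ k : ℤ, 1 ≤ k → k ≤ n → u k = k := fun k h₁ h₂ =>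
    le_antisymm (hle k h₂ h₁) (hge k h₁ h₂)
  ext x
  rw [Perm.one_apply]
  rcases lt_trichotomy x 0 with hx | rfl | hx
  · by_cases hxn : -x ≤ n
    · rw [← neg_neg x, hu.1, hpos (-x) (by omega) hxn]
    · exact hu.2 x (lt_abs.2 (Or.inr (by omega)))
  · exact apply_zero_of_odd hu.1
  · by_cases hxn : x ≤ n
    · exact hpos x hx hxn
    · exact hu.2 x (lt_abs.2 (Or.inl (by omega)))

lemma exists_mem_gens_lengthB_mul_add_one_eq {n : ℕ} (hn : 1 ≤ n) {u : Perm ℤ} (hu : u ∈ W n)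
    (hu1 : u ≠ 1) : ∃ g ∈ gens n, lengthB n (u * g) + 1 = lengthB n u := by
  rcases lt_or_gt_of_ne (apply_ne_zero_of_odd hu.1 one_ne_zero) with h | h
  · exact ⟨t, Set.mem_insert _ _, lengthB_mul_t_of_neg hu.1 hn h⟩
  obtain ⟨k, hk, hkn, hdesc⟩ : ∃ k : ℤ, 1 ≤ k ∧ k + 1 ≤ n ∧ u (k + 1) < u k := by
    by_contra! hmono
    exact hu1 (eq_one_of_mem_W_of_increasing hu h fun k hk hkn =>
      (hmono k hk hkn).lt_of_ne (u.injective.ne (by omega)))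
  exact ⟨s k, s_mem_gens hk hkn, lengthB_mul_s_of_gt hk hkn hdesc⟩

lemma exists_word_length_eq_lengthB {n : ℕ} (hn : 1 ≤ n) {u : Perm ℤ} (hu : u ∈ W n) :
    ∃ l : List (Perm ℤ), l.length = lengthB n u ∧ (∀ g ∈ l, g ∈ gens n) ∧ l.prod = u := by
  induction hm : lengthB n u generalizing u with
  | zero =>
    obtain rfl : u = 1 := by
      by_contra hu1
      obtain ⟨g, -, hg⟩ := exists_mem_gens_lengthB_mul_add_one_eq hn hu hu1
      omega
    exact ⟨[], rfl, by simp, rfl⟩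
  | succ m ih =>
    have hu1 : u ≠ 1 := by
      rintro rfl
      simp [lengthB_one] at hm
    obtain ⟨g, hg, hlen⟩ := exists_mem_gens_lengthB_mul_add_one_eq hn hu hu1
    obtain ⟨l, hl, hgens, hprod⟩ := ih (mul_mem_W hu (gens_subset_W hn hg)) (by omega)
    refine ⟨l ++ [g], by simp [hl], fun g' hg' => ?_, ?_⟩
    · rcases List.mem_append.1 hg' with h | h
      · exact hgens g' h
      · rwa [List.mem_singleton.1 h]
    · rw [List.prod_append, hprod, List.prod_singleton, mul_assoc, mul_self_of_mem_gens hg,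
        mul_one]

lemma len_eq_lengthB {n : ℕ} (hn : 1 ≤ n) {u : Perm ℤ} (hu : u ∈ W n) :
    len n u = lengthB n u := by
  obtain ⟨l, hl⟩ := exists_word_length_eq_lengthB hn hu
  refine le_antisymm (Nat.sInf_le ⟨l, hl⟩) (le_csInf ⟨_, l, hl⟩ ?_)
  rintro k ⟨l', rfl, hgens, rfl⟩
  simpa [lengthB_one] using lengthB_mul_prod_le hn l' (one_mem_W n) hgens

lemma lt_iff_pos_of_mem_Area {n : ℕ} {w : Perm ℤ} (hw : w ∈ Area n) {i : ℤ} (hi : 1 ≤ i)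
    (hin : i + 1 ≤ n) : w (i + 1) < w i ↔ 0 < w i := by
  have h₀ := apply_ne_zero_of_odd hw.1.1 (show i ≠ 0 by omega)
  have h₁ := apply_ne_zero_of_odd hw.1.1 (show i + 1 ≠ 0 by omega)
  have hne := w.injective.ne (show i ≠ i + 1 by omega)
  have := hw.2 i (i + 1) hi (by omega) hin
  omega

theorem statement7_general (n : ℕ) (w : Equiv.Perm ℤ) (hw : w ∈ Area n)
    (i : ℕ) (hi1 : 1 ≤ i) (hi2 : i ≤ n - 1) :
    len n (w * s (i : ℤ)) < len n w ↔ len n w < len n (w * tt i) := by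
  have hn : 1 ≤ n := by omega
  have hi : (1 : ℤ) ≤ i := by exact_mod_cast hi1
  have hin : (i : ℤ) + 1 ≤ n := by omega
  have hW := hw.1
  rw [tt_eq_swap hi1, len_eq_lengthB hn hW, len_eq_lengthB hn (mul_mem_W hW (s_mem_W hi hin)),
    len_eq_lengthB hn (mul_mem_W hW (swap_neg_mem_W hi (by omega))),
    lengthB_mul_s_lt_iff hi hin, lengthB_lt_mul_swap_neg_iff hW.1 hi (by omega)]
  exact lt_iff_pos_of_mem_Area hw hi hin

theorem statement7 (n : ℕ) (hn : 2 ≤ n) (w : Equiv.Perm ℤ) (hw : w ∈ Area n)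
    (i : ℕ) (hi1 : 1 ≤ i) (hi2 : i ≤ n - 1) :
    len n (w * s (i : ℤ)) < len n w ↔ len n w < len n (w * tt i) :=
  statement7_general n w hw i hi1 hi2

end BnPaper
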